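/- arXiv:2109.13559 — 4 statements merged into one kernel-verified Lean document; each statement's English description precedes it below -/
import Mathlib

section
/- Every solution of the system ẏ = (a - b·k)·y, k̇ = b·y² with initial condition (y₀, k₀) remains for all t ≥ t₀ in the closed ball centered at (0, (a+p)/b) of radius √(y₀² + (k₀ - (a+p)/b)²), for any p ≥ 0. -/
/-!
The squared distance `V = y² + (k - c)²` to the centre `(0, c)` is a Lyapunov function: along
solutions `V' = 2 (a - b c) y²`, and for `c = (a + p)/b` this is `-2 p y² ≤ 0`. Hence `V` is
antitone on `[t₀, ∞)`, so the solution never leaves the ball of radius `√(V t₀)`.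
-/

open Set

lemma antitoneOn_Ici_of_hasDerivAt_nonpos {f f' : ℝ → ℝ} {t₀ : ℝ}
    (hf : ∀ t ≥ t₀, HasDerivAt f (f' t) t) (hf' : ∀ t > t₀, f' t ≤ 0) :
    AntitoneOn f (Ici t₀) := by
  refine antitoneOn_of_hasDerivWithinAt_nonpos (f' := f') (convex_Ici t₀)
    (fun t ht => (hf t ht).continuousAt.continuousWithinAt) (fun t ht => ?_) (fun t ht => ?_)
  · rw [interior_Ici] at ht
    exact (hf t ht.le).hasDerivWithinAt
  · rw [interior_Ici] at ht
    exact hf' t ht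

lemma hasDerivAt_sq_dist_center {a b c t : ℝ} {y k : ℝ → ℝ}
    (hy : HasDerivAt y ((a - b * k t) * y t) t) (hk : HasDerivAt k (b * y t ^ 2) t) :
    HasDerivAt (fun s => y s ^ 2 + (k s - c) ^ 2) (2 * (a - b * c) * y t ^ 2) t := by
  refine ((hy.fun_pow 2).fun_add ((hk.sub_const c).fun_pow 2)).congr_deriv ?_
  ring

theorem solutions_in_closed_ball (a b p t₀ y₀ k₀ : ℝ) (hb : b ≠ 0) (hp : 0 ≤ p)
    (y k : ℝ → ℝ)
    (hy : ∀ t ≥ t₀, HasDerivAt y ((a - b * k t) * y t) t)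
    (hk : ∀ t ≥ t₀, HasDerivAt k (b * (y t) ^ 2) t)
    (hy0 : y t₀ = y₀) (hk0 : k t₀ = k₀) :
    ∀ t ≥ t₀,
      Real.sqrt ((y t - 0) ^ 2 + (k t - (a + p) / b) ^ 2)
        ≤ Real.sqrt (y₀ ^ 2 + (k₀ - (a + p) / b) ^ 2) := by
  have hrate : a - b * ((a + p) / b) = -p := by field_simp; ring
  have hV_anti : AntitoneOn (fun s => y s ^ 2 + (k s - (a + p) / b) ^ 2) (Ici t₀) :=
    antitoneOn_Ici_of_hasDerivAt_nonpos
      (fun t ht => hasDerivAt_sq_dist_center (hy t ht) (hk t ht))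
      (fun t _ => by rw [hrate]; nlinarith [sq_nonneg (y t)])
  intro t ht
  rw [sub_zero, ← hy0, ← hk0]
  exact Real.sqrt_le_sqrt (hV_anti self_mem_Ici ht ht)
end

section
/- Suppose b > 0 and (y₀, k₀) ∈ ℝ² with y₀ ≠ 0. Let c₀ = a/b and d₀ = √(y₀² + (k₀ - c₀)²). Then any global solution (y(t), k(t)) of ẏ = (a - b·k)·y, k̇ = b·y² with (y(t₀), k(t₀)) = (y₀, k₀) satisfies lim_{t→∞} (y(t), k(t)) = (0, c₀ + d₀). -/
/-!
The quantity `y² + (k - a/b)²` is a first integral, so the orbit stays on the circle of radius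
`d₀` about `(0, a/b)`. Since `k' = b y² ≥ 0`, the coordinate `k` increases and is bounded by
`a/b + d₀`, hence converges. A convergent function cannot have a derivative tending to a nonzero
limit, so `y² = d₀² - (k - a/b)² → 0` and `k` tends to `a/b ± d₀`; the sign is `+` because
`k ≥ k₀ > a/b - d₀` when `y₀ ≠ 0`.
-/

open Filter Real Set Topology

theorem tendsto_atTop_of_hasDerivAt_of_le {f f' : ℝ → ℝ} {t₀ δ : ℝ} (hδ : 0 < δ)
    (hf : ∀ t ≥ t₀, HasDerivAt f (f' t) t) (hf' : ∀ t ≥ t₀, δ ≤ f' t) :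
    Tendsto f atTop atTop := by
  have hmono : MonotoneOn (fun t => f t - δ * t) (Ici t₀) := by
    refine monotoneOn_of_hasDerivWithinAt_nonneg (convex_Ici t₀) (f' := fun t => f' t - δ * 1)
      (fun t ht => ((hf t ht).sub ((hasDerivAt_id t).const_mul δ)).continuousAt.continuousWithinAt)
      (fun t ht => ?_) (fun t ht => ?_)
    · rw [interior_Ici] at ht
      exact ((hf t ht.le).sub ((hasDerivAt_id t).const_mul δ)).hasDerivWithinAt
    · rw [interior_Ici] at ht
      simpa using hf' t ht.le
  have hlinear : Tendsto (fun t => δ * t + (f t₀ - δ * t₀)) atTop atTop :=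
    tendsto_atTop_add_const_right _ _ (tendsto_id.const_mul_atTop hδ)
  refine tendsto_atTop_mono' _ ?_ hlinear
  filter_upwards [eventually_ge_atTop t₀] with t ht
  have := hmono self_mem_Ici ht ht
  simp only at this
  linarith

theorem nonpos_of_tendsto_of_hasDerivAt {f f' : ℝ → ℝ} {t₀ L m : ℝ}
    (hf : ∀ t ≥ t₀, HasDerivAt f (f' t) t) (hfL : Tendsto f atTop (𝓝 L))
    (hf'm : Tendsto f' atTop (𝓝 m)) : m ≤ 0 := by
  by_contra! hm
  obtain ⟨T, hT⟩ := eventually_atTop.1 (hf'm.eventually (lt_mem_nhds (half_lt_self hm)))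
  exact not_tendsto_atTop_of_tendsto_nhds hfL
    (tendsto_atTop_of_hasDerivAt_of_le (half_pos hm) (t₀ := max t₀ T)
      (fun t ht => hf t (le_of_max_le_left ht)) fun t ht => (hT t (le_of_max_le_right ht)).le)

theorem eq_zero_of_tendsto_of_hasDerivAt {f f' : ℝ → ℝ} {t₀ L m : ℝ}
    (hf : ∀ t ≥ t₀, HasDerivAt f (f' t) t) (hfL : Tendsto f atTop (𝓝 L))
    (hf'm : Tendsto f' atTop (𝓝 m)) : m = 0 := by
  refine le_antisymm (nonpos_of_tendsto_of_hasDerivAt hf hfL hf'm) ?_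
  simpa using nonpos_of_tendsto_of_hasDerivAt (fun t ht => (hf t ht).neg) hfL.neg hf'm.neg

theorem MonotoneOn.exists_tendsto_of_bddAbove {f : ℝ → ℝ} {t₀ : ℝ}
    (hf : MonotoneOn f (Ici t₀)) (hbdd : BddAbove (f '' Ici t₀)) :
    ∃ L, Tendsto f atTop (𝓝 L) := by
  set g : ℝ → ℝ := fun t => f (max t t₀)
  have hg : Monotone g := fun s t hst =>
    hf (le_max_right s t₀) (le_max_right t t₀) (max_le_max_right t₀ hst)
  have hgbdd : BddAbove (range g) :=
    hbdd.mono (range_subset_iff.2 fun t => mem_image_of_mem f (le_max_right t t₀))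
  refine ⟨⨆ t, g t, (tendsto_atTop_ciSup hg hgbdd).congr' ?_⟩
  filter_upwards [eventually_ge_atTop t₀] with t ht
  simp only [g, max_eq_left ht]

theorem sq_add_sq_sub_div_eq {a b t₀ : ℝ} {y k : ℝ → ℝ} (hb : b ≠ 0)
    (hy : ∀ t ≥ t₀, HasDerivAt y ((a - b * k t) * y t) t)
    (hk : ∀ t ≥ t₀, HasDerivAt k (b * y t ^ 2) t) :
    ∀ t ≥ t₀, y t ^ 2 + (k t - a / b) ^ 2 = y t₀ ^ 2 + (k t₀ - a / b) ^ 2 := by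
  have hderiv : ∀ t ≥ t₀, HasDerivAt (fun s => y s ^ 2 + (k s - a / b) ^ 2) 0 t := by
    intro t ht
    refine (((hy t ht).fun_pow 2).fun_add
      (((hk t ht).sub_const (a / b)).fun_pow 2)).congr_deriv ?_
    norm_num
    field_simp
    ring
  intro t ht
  exact constant_of_has_deriv_right_zero
    (fun s hs => (hderiv s hs.1).continuousAt.continuousWithinAt)
    (fun s hs => (hderiv s hs.1).hasDerivWithinAt) t ⟨ht, le_rfl⟩

theorem convergence_limit (a b t₀ y₀ k₀ : ℝ) (hb : 0 < b) (hy₀ : y₀ ≠ 0)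
    (y k : ℝ → ℝ)
    (hy : ∀ t ≥ t₀, HasDerivAt y ((a - b * k t) * y t) t)
    (hk : ∀ t ≥ t₀, HasDerivAt k (b * (y t) ^ 2) t)
    (hi1 : y t₀ = y₀) (hi2 : k t₀ = k₀) :
    Filter.Tendsto (fun t => (y t, k t)) Filter.atTop
      (nhds ((0 : ℝ), a / b + Real.sqrt (y₀ ^ 2 + (k₀ - a / b) ^ 2))) := by
  set c := a / b
  set d := √(y₀ ^ 2 + (k₀ - c) ^ 2)
  have hd : d ^ 2 = y₀ ^ 2 + (k₀ - c) ^ 2 := sq_sqrt (by positivity)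
  have hcircle : ∀ t ≥ t₀, y t ^ 2 + (k t - c) ^ 2 = d ^ 2 := by
    rw [hd, ← hi1, ← hi2]
    exact sq_add_sq_sub_div_eq hb.ne' hy hk
  have hmono : MonotoneOn k (Ici t₀) :=
    monotoneOn_of_hasDerivWithinAt_nonneg (convex_Ici t₀)
      (fun t ht => (hk t ht).continuousAt.continuousWithinAt)
      (fun t ht => (hk t (interior_subset ht)).hasDerivWithinAt) fun t _ => by positivity
  obtain ⟨L, hkL⟩ := hmono.exists_tendsto_of_bddAbove ⟨c + d, by
    rintro _ ⟨t, ht, rfl⟩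
    have hsq : (k t - c) ^ 2 ≤ d ^ 2 := by nlinarith [hcircle t ht]
    linarith [(abs_le_of_sq_le_sq' hsq (sqrt_nonneg _)).2]⟩
  have hy2 : Tendsto (fun t => y t ^ 2) atTop (𝓝 (d ^ 2 - (L - c) ^ 2)) := by
    refine (tendsto_const_nhds.sub ((hkL.sub_const c).pow 2)).congr' ?_
    filter_upwards [eventually_ge_atTop t₀] with t ht
    linarith [hcircle t ht]
  have hlim : d ^ 2 - (L - c) ^ 2 = 0 :=
    (mul_eq_zero.1 (eq_zero_of_tendsto_of_hasDerivAt hk hkL (hy2.const_mul b))).resolve_left hb.ne'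
  have hk₀L : k₀ ≤ L := hi2 ▸ ge_of_tendsto hkL
    (eventually_atTop.2 ⟨t₀, fun t ht => hmono self_mem_Ici ht ht⟩)
  have hL : L = c + d := by
    rcases mul_eq_zero.1 (show (L - c - d) * (L - c + d) = 0 by linear_combination -hlim) with h | h
    · linarith
    · have hdk : d ≤ c - k₀ := by linarith
      nlinarith [sq_pos_of_ne_zero hy₀, mul_self_le_mul_self (sqrt_nonneg _) hdk]
  have hy0 : Tendsto y atTop (𝓝 0) := by
    rw [tendsto_zero_iff_abs_tendsto_zero]
    simpa [Function.comp_def, hlim, sqrt_sq_eq_abs] using (continuous_sqrt.tendsto _).comp hy2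
  exact hy0.prodMk_nhds (hL ▸ hkL)
end

section
/- For every d > 0, the system r' = 0, φ' = b·r·cos φ with initial condition r(t₀) = d, φ(t₀) = φ₀ with cos φ₀ > 0 and b > 0 has the property that φ(t) converges monotonically to the smallest solution of cos φ = 0 above φ₀, i.e., φ(t) → π/2 + 2πm where m is the unique integer with φ₀ ∈ (-π/2 + 2πm, π/2 + 2πm). -/
/-!
The Gudermannian function `gd = arctan ∘ sinh` satisfies `gd' = cos ∘ gd` and maps `ℝ` increasingly
onto `(-π/2, π/2)`. Hence `t ↦ gd (k t + c) + 2πm` solves `φ' = k cos φ`, and `c` can be chosen so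
that it starts at `φ₀`. Since `k cos` is Lipschitz, this is the only solution, and it increases to
`π/2 + 2πm` because `gd` increases to `π/2`.
-/

open Real Set Filter Topology

noncomputable def gudermannian (x : ℝ) : ℝ := arctan (sinh x)

theorem cos_gudermannian (x : ℝ) : cos (gudermannian x) = (cosh x)⁻¹ := by
  rw [gudermannian, cos_arctan, add_comm, ← cosh_sq, sqrt_sq (cosh_pos x).le, one_div]

theorem hasDerivAt_gudermannian (x : ℝ) :
    HasDerivAt gudermannian (cos (gudermannian x)) x := by
  have h := (hasDerivAt_arctan (sinh x)).comp x (hasDerivAt_sinh x)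
  refine h.congr_deriv ?_
  rw [cos_gudermannian, add_comm, ← cosh_sq]
  field_simp [(cosh_pos x).ne']

theorem gudermannian_strictMono : StrictMono gudermannian :=
  arctan_strictMono.comp sinh_strictMono

theorem tendsto_gudermannian_atTop : Tendsto gudermannian atTop (𝓝 (π / 2)) :=
  (tendsto_nhds_of_tendsto_nhdsWithin tendsto_arctan_atTop).comp sinhOrderIso.tendsto_atTop

theorem gudermannian_arsinh_tan {x : ℝ} (hx : x ∈ Ioo (-(π / 2)) (π / 2)) :
    gudermannian (arsinh (tan x)) = x := by
  rw [gudermannian, sinh_arsinh, arctan_tan hx.1 hx.2]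

theorem lipschitzWith_const_mul_cos (k : ℝ) : LipschitzWith ‖k‖₊ fun x => k * cos x :=
  LipschitzWith.of_dist_le_mul fun x y => by
    rw [dist_eq, dist_eq, ← mul_sub, abs_mul, coe_nnnorm, norm_eq_abs]
    exact mul_le_mul_of_nonneg_left (abs_cos_sub_cos_le x y) (abs_nonneg k)

theorem eqOn_Ici_of_hasDerivAt_const_mul_cos {k t₀ : ℝ} {f g : ℝ → ℝ}
    (hf : ∀ t ≥ t₀, HasDerivAt f (k * cos (f t)) t)
    (hg : ∀ t ≥ t₀, HasDerivAt g (k * cos (g t)) t) (h₀ : f t₀ = g t₀) :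
    EqOn f g (Ici t₀) := fun t ht =>
  ODE_solution_unique (v := fun _ x => k * cos x) (a := t₀) (b := t)
    (fun _ => lipschitzWith_const_mul_cos k)
    (HasDerivAt.continuousOn fun s hs => hf s hs.1)
    (fun s hs => (hf s hs.1).hasDerivWithinAt)
    (HasDerivAt.continuousOn fun s hs => hg s hs.1)
    (fun s hs => (hg s hs.1).hasDerivWithinAt) h₀ ⟨ht, le_rfl⟩

theorem hasDerivAt_gudermannian_affine_add_two_pi_mul (k c t : ℝ) (m : ℤ) :
    HasDerivAt (fun t => gudermannian (k * t + c) + 2 * π * m)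
      (k * cos (gudermannian (k * t + c) + 2 * π * m)) t := by
  have h := ((hasDerivAt_gudermannian (k * t + c)).comp t
    (((hasDerivAt_id t).const_mul k).add_const c)).add_const (2 * π * m)
  refine h.congr_deriv ?_
  rw [show 2 * π * m = m * (2 * π) by ring, cos_add_int_mul_two_pi]
  simp [mul_comm]

theorem phi_converges_general (b d t₀ φ₀ : ℝ) (hb : 0 < b) (hd : 0 < d)
    (φ : ℝ → ℝ)
    (hφ : ∀ t ≥ t₀, HasDerivAt φ (b * d * Real.cos (φ t)) t)
    (hφ0 : φ t₀ = φ₀)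
    (m : ℤ)
    (hm : φ₀ ∈ Set.Ioo (-(Real.pi / 2) + 2 * Real.pi * m) (Real.pi / 2 + 2 * Real.pi * m)) :
    MonotoneOn φ (Set.Ici t₀) ∧
    Filter.Tendsto φ Filter.atTop (nhds (Real.pi / 2 + 2 * Real.pi * m)) := by
  set k := b * d
  have hk : 0 < k := mul_pos hb hd
  set c := arsinh (tan (φ₀ - 2 * π * m)) - k * t₀
  set Φ := fun t => gudermannian (k * t + c) + 2 * π * m
  have hΦ₀ : Φ t₀ = φ₀ := by
    have hψ₀ : φ₀ - 2 * π * m ∈ Ioo (-(π / 2)) (π / 2) := ⟨by linarith [hm.1], by linarith [hm.2]⟩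
    simp only [Φ, c, add_sub_cancel, gudermannian_arsinh_tan hψ₀, sub_add_cancel]
  have hφΦ : EqOn φ Φ (Ici t₀) :=
    eqOn_Ici_of_hasDerivAt_const_mul_cos hφ
      (fun t _ => hasDerivAt_gudermannian_affine_add_two_pi_mul k c t m) (hφ0.trans hΦ₀.symm)
  have hΦ_mono : Monotone Φ := fun s t hst => by
    dsimp only [Φ]
    gcongr
    exact gudermannian_strictMono.monotone (by gcongr)
  refine ⟨(hΦ_mono.monotoneOn _).congr hφΦ.symm, ?_⟩
  have hΦ_lim : Tendsto Φ atTop (𝓝 (π / 2 + 2 * π * m)) :=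
    (tendsto_gudermannian_atTop.comp
      ((tendsto_id.const_mul_atTop hk).atTop_add tendsto_const_nhds)).add_const _
  exact hΦ_lim.congr' (eventuallyEq_of_mem (Ici_mem_atTop t₀) hφΦ).symm

theorem phi_converges (b d t₀ φ₀ : ℝ) (hb : 0 < b) (hd : 0 < d)
    (φ : ℝ → ℝ)
    (hφ : ∀ t ≥ t₀, HasDerivAt φ (b * d * Real.cos (φ t)) t)
    (hφ0 : φ t₀ = φ₀) (hcos : 0 < Real.cos φ₀)
    (m : ℤ)
    (hm : φ₀ ∈ Set.Ioo (-(Real.pi / 2) + 2 * Real.pi * m) (Real.pi / 2 + 2 * Real.pi * m)) :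
    MonotoneOn φ (Set.Ici t₀) ∧
    Filter.Tendsto φ Filter.atTop (nhds (Real.pi / 2 + 2 * Real.pi * m)) :=
  phi_converges_general b d t₀ φ₀ hb hd φ hφ hφ0 m hm
end

section
/- For any a ∈ ℝ and b ≠ 0, and any initial condition (y₀, k₀) ∈ ℝ², the system ẏ = (a - b·k)·y, k̇ = b·y² admits a unique solution defined on all of [t₀, ∞). -/
/-!
With `u = k - a/b` the system reads `ẏ = -b u y`, `u̇ = b y²`, so `y² + u²` is conserved and
every forward solution stays in a compact ball, on which the `C¹` vector field is Lipschitz;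
Grönwall then gives uniqueness. For existence, put `r² = y₀² + u₀²`, `u₀ = α r` with `|α| ≤ 1`,
`x = b r (t - t₀)`, `D = cosh x + α sinh x` and `S = sinh x + α cosh x`. Then `D' = b r S`,
`S' = b r D` and `D² - S² = 1 - α²`, and `y = y₀ / D`, `u = r S / D` solve the system;
`D > 0` because `|α| ≤ 1`.
-/

open Set Metric Real

section Uniqueness

variable {E : Type*} [NormedAddCommGroup E] [NormedSpace ℝ E]

theorem eqOn_Ici_of_hasDerivAt_of_mem_convex_compact {v : E → E} {s : Set E}
    (hv : ContDiffOn ℝ 1 v s) (hs : Convex ℝ s) (hs' : IsCompact s) {f g : ℝ → E} {t₀ : ℝ}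
    (hf : ∀ t ≥ t₀, HasDerivAt f (v (f t)) t) (hfs : ∀ t ≥ t₀, f t ∈ s)
    (hg : ∀ t ≥ t₀, HasDerivAt g (v (g t)) t) (hgs : ∀ t ≥ t₀, g t ∈ s)
    (h₀ : f t₀ = g t₀) : EqOn f g (Ici t₀) := by
  obtain ⟨K, hK⟩ := hv.exists_lipschitzOnWith one_ne_zero hs hs'
  intro t ht
  exact ODE_solution_unique_of_mem_Icc_right (v := fun _ => v) (s := fun _ => s)
    (fun _ _ => hK)
    (HasDerivAt.continuousOn fun τ hτ => hf τ hτ.1)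
    (fun τ hτ => (hf τ hτ.1).hasDerivWithinAt) (fun τ hτ => hfs τ hτ.1)
    (HasDerivAt.continuousOn fun τ hτ => hg τ hτ.1)
    (fun τ hτ => (hg τ hτ.1).hasDerivWithinAt) (fun τ hτ => hgs τ hτ.1)
    h₀ (right_mem_Icc.2 ht)

end Uniqueness

def vectorField (a b : ℝ) (p : ℝ × ℝ) : ℝ × ℝ := ((a - b * p.2) * p.1, b * p.1 ^ 2)

theorem contDiff_vectorField (a b : ℝ) : ContDiff ℝ 1 (vectorField a b) := by
  unfold vectorField
  fun_prop

section Conservation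

variable {a b t₀ : ℝ} {y k : ℝ → ℝ}

theorem sq_add_sq_sub_div_eq_of_hasDerivAt (hb : b ≠ 0)
    (hy : ∀ t ≥ t₀, HasDerivAt y ((a - b * k t) * y t) t)
    (hk : ∀ t ≥ t₀, HasDerivAt k (b * y t ^ 2) t) :
    ∀ t ≥ t₀, y t ^ 2 + (k t - a / b) ^ 2 = y t₀ ^ 2 + (k t₀ - a / b) ^ 2 := by
  have hE : ∀ t ≥ t₀, HasDerivAt (fun s => y s ^ 2 + (k s - a / b) ^ 2) 0 t := by
    intro t ht
    refine (((hy t ht).pow 2).add (((hk t ht).sub_const (a / b)).pow 2)).congr_deriv ?_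
    push_cast
    field_simp
    ring
  intro t ht
  exact constant_of_has_deriv_right_zero (HasDerivAt.continuousOn fun s hs => hE s hs.1)
    (fun s hs => (hE s hs.1).hasDerivWithinAt) t (right_mem_Icc.2 ht)

theorem mem_closedBall_of_hasDerivAt (hb : b ≠ 0)
    (hy : ∀ t ≥ t₀, HasDerivAt y ((a - b * k t) * y t) t)
    (hk : ∀ t ≥ t₀, HasDerivAt k (b * y t ^ 2) t) :
    ∀ t ≥ t₀, (y t, k t) ∈ closedBall ((0 : ℝ), a / b) √(y t₀ ^ 2 + (k t₀ - a / b) ^ 2) := by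
  intro t ht
  rw [← sq_add_sq_sub_div_eq_of_hasDerivAt hb hy hk t ht, mem_closedBall, Prod.dist_eq,
    Real.dist_eq, Real.dist_eq, sub_zero, max_le_iff]
  constructor <;> apply abs_le_sqrt <;> nlinarith

end Conservation

theorem cosh_add_mul_sinh_pos {α : ℝ} (hα : |α| ≤ 1) (x : ℝ) : 0 < cosh x + α * sinh x := by
  have h : |sinh x| < cosh x :=
    abs_lt.2 ⟨neg_lt.1 (by simpa using sinh_lt_cosh (-x)), sinh_lt_cosh x⟩
  have : |α * sinh x| ≤ |sinh x| := by
    rw [abs_mul]; exact mul_le_of_le_one_left (abs_nonneg _) hα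
  linarith [neg_abs_le (α * sinh x)]

theorem exists_abs_le_one_mul_eq {u r : ℝ} (h : |u| ≤ r) : ∃ α : ℝ, |α| ≤ 1 ∧ α * r = u := by
  rcases (abs_nonneg u).trans h |>.eq_or_lt with hr | hr
  · exact ⟨0, by simp, by simpa [← hr, eq_comm] using h⟩
  · exact ⟨u / r, by rwa [abs_div, abs_of_pos hr, div_le_one hr], div_mul_cancel₀ _ hr.ne'⟩

theorem exists_hasDerivAt_solution (a b t₀ y₀ k₀ : ℝ) (hb : b ≠ 0) :
    ∃ y k : ℝ → ℝ, y t₀ = y₀ ∧ k t₀ = k₀ ∧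
      (∀ t, HasDerivAt y ((a - b * k t) * y t) t) ∧ (∀ t, HasDerivAt k (b * y t ^ 2) t) := by
  set u₀ := k₀ - a / b
  set r := √(y₀ ^ 2 + u₀ ^ 2)
  have hr : r ^ 2 = y₀ ^ 2 + u₀ ^ 2 := sq_sqrt (by positivity)
  obtain ⟨α, hα, hαr⟩ : ∃ α : ℝ, |α| ≤ 1 ∧ α * r = u₀ :=
    exists_abs_le_one_mul_eq (abs_le_sqrt (by nlinarith))
  set x := fun t => b * r * (t - t₀)
  set D := fun t => cosh (x t) + α * sinh (x t)
  set S := fun t => sinh (x t) + α * cosh (x t)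
  have hx (t : ℝ) : HasDerivAt x (b * r) t := by
    simpa using ((hasDerivAt_id t).sub_const t₀).const_mul (b * r)
  have hD (t : ℝ) : HasDerivAt D (b * r * S t) t :=
    ((hx t).cosh.add ((hx t).sinh.const_mul α)).congr_deriv (by ring)
  have hS (t : ℝ) : HasDerivAt S (b * r * D t) t :=
    ((hx t).sinh.add ((hx t).cosh.const_mul α)).congr_deriv (by ring)
  have hDS (t : ℝ) : D t ^ 2 - S t ^ 2 = 1 - α ^ 2 := by
    linear_combination (1 - α ^ 2) * cosh_sq_sub_sinh_sq (x t)
  have hD₀ (t : ℝ) : D t ≠ 0 := (cosh_add_mul_sinh_pos hα (x t)).ne'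
  have hDt₀ : D t₀ = 1 := by simp [D, x]
  have hSt₀ : S t₀ = α := by simp [S, x]
  clear_value x D S
  refine ⟨fun t => y₀ / D t, fun t => a / b + r * S t / D t, ?_, ?_, fun t => ?_, fun t => ?_⟩
  · simp [hDt₀]
  · simp only [hDt₀, hSt₀, div_one, mul_comm r, hαr, u₀]
    ring
  · refine ((hasDerivAt_const t y₀).div (hD t) (hD₀ t)).congr_deriv ?_
    field_simp
    ring
  · refine (((hS t).const_mul r).div (hD t) (hD₀ t)).const_add (a / b) |>.congr_deriv ?_
    field_simp
    rw [hDS]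
    congr 1
    linear_combination hr - (α * r + u₀) * hαr

theorem existence_uniqueness (a b t₀ y₀ k₀ : ℝ) (hb : b ≠ 0) :
    ∃ y k : ℝ → ℝ,
      (y t₀ = y₀ ∧ k t₀ = k₀ ∧
        (∀ t ≥ t₀, HasDerivAt y ((a - b * k t) * y t) t) ∧
        (∀ t ≥ t₀, HasDerivAt k (b * (y t) ^ 2) t)) ∧
      (∀ y' k' : ℝ → ℝ,
        (y' t₀ = y₀ ∧ k' t₀ = k₀ ∧
          (∀ t ≥ t₀, HasDerivAt y' ((a - b * k' t) * y' t) t) ∧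
          (∀ t ≥ t₀, HasDerivAt k' (b * (y' t) ^ 2) t)) →
        ∀ t ≥ t₀, y' t = y t ∧ k' t = k t) := by
  obtain ⟨y, k, hy₀, hk₀, hy, hk⟩ := exists_hasDerivAt_solution a b t₀ y₀ k₀ hb
  refine ⟨y, k, ⟨hy₀, hk₀, fun t _ => hy t, fun t _ => hk t⟩, ?_⟩
  rintro y' k' ⟨hy₀', hk₀', hy', hk'⟩ t ht
  have hball := mem_closedBall_of_hasDerivAt (t₀ := t₀) hb (fun t _ => hy t) (fun t _ => hk t)
  have hball' := mem_closedBall_of_hasDerivAt hb hy' hk'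
  rw [hy₀, hk₀] at hball
  rw [hy₀', hk₀'] at hball'
  have key := eqOn_Ici_of_hasDerivAt_of_mem_convex_compact (f := fun t => (y' t, k' t))
    (g := fun t => (y t, k t)) (contDiff_vectorField a b).contDiffOn (convex_closedBall _ _)
    (isCompact_closedBall _ _) (fun t ht => (hy' t ht).prodMk (hk' t ht)) hball'
    (fun t _ => (hy t).prodMk (hk t)) hball (by simp [hy₀, hk₀, hy₀', hk₀']) ht
  exact Prod.ext_iff.1 key
end
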